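/- arXiv:1609.09529 — 2 statements merged into one kernel-verified Lean document; each statement's English description precedes it below -/
import Mathlib

section
/- Let w : Fin n → ℝ with w_i > 0 for all i, let C be an L×n real matrix, and let W be the matrix with entries W_{ij} = C_{ij} w_j / (∑_k C_{ik} w_k) when the row sums ∑_k C_{ik} w_k are nonzero (i.e., W = normalization of C·Diag(w) so each row sums to 1). Then the vector (w_1,...,w_n) lies in the row space of W if and only if the vector (1,1,...,1) lies in the row space of C. -/
/-- With `w_i > 0`, `C` a 0-1 matrix with nonzero weighted row sums, and
`W i j = C i j * w j / ∑ k, C i k * w k`, the vector `w` lies in the row space of `W`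
iff the all-ones vector lies in the row space of `C`. -/
theorem w_in_rowspace_W_iff_ones_in_rowspace_C {L n : ℕ}
    (w : Fin n → ℝ) (hw : ∀ j, 0 < w j)
    (C : Matrix (Fin L) (Fin n) ℝ)
    (hC01 : ∀ i j, C i j = 0 ∨ C i j = 1)
    (hrow : ∀ i, (∑ k, C i k * w k) ≠ 0)
    (W : Matrix (Fin L) (Fin n) ℝ)
    (hW : ∀ i j, W i j = C i j * w j / ∑ k, C i k * w k) :
    (w ∈ Submodule.span ℝ (Set.range fun i : Fin L => W i)) ↔
      ((fun _ => (1 : ℝ)) ∈ Submodule.span ℝ (Set.range fun i : Fin L => C i)) := by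
  set s : Fin L → ℝ := fun i => ∑ k, C i k * w k with hs
  let e : (Fin n → ℝ) ≃ₗ[ℝ] (Fin n → ℝ) :=
    LinearEquiv.piCongrRight fun j => LinearEquiv.smulOfNeZero ℝ ℝ (w j) (hw j).ne'
  have he : ∀ v : Fin n → ℝ, e v = fun j => w j * v j := fun v => rfl
  have hWe : ∀ i, W i = (s i)⁻¹ • e (C i) := by
    intro i; funext j
    simp only [hW, he, Pi.smul_apply, smul_eq_mul, hs]
    ring
  have hspan : Submodule.span ℝ (Set.range fun i : Fin L => W i)
      = (Submodule.span ℝ (Set.range fun i : Fin L => C i)).map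
          (e : (Fin n → ℝ) →ₗ[ℝ] (Fin n → ℝ)) := by
    rw [Submodule.map_span]
    apply le_antisymm
    · rw [Submodule.span_le]; rintro _ ⟨i, rfl⟩
      show W i ∈ _
      rw [hWe i]
      exact Submodule.smul_mem _ _ (Submodule.subset_span ⟨C i, ⟨i, rfl⟩, rfl⟩)
    · rw [Submodule.span_le]; rintro _ ⟨_, ⟨i, rfl⟩, rfl⟩
      show e (C i) ∈ _
      have h2 : e (C i) = s i • W i := by
        rw [hWe i, smul_smul, mul_inv_cancel₀ (hrow i), one_smul]
      rw [h2]
      exact Submodule.smul_mem _ _ (Submodule.subset_span ⟨i, rfl⟩)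
  have hew : e (fun _ => 1) = w := by funext j; simp [he]
  rw [hspan, Submodule.mem_map_equiv]
  have hsym : e.symm w = fun _ => (1 : ℝ) := by rw [← hew, LinearEquiv.symm_apply_apply]
  rw [hsym]
end

section
/- Define V(d_1,...,d_n) = ∑_j (d_j / ∑_k d_k)² for d ∈ [1,m]^n with n ≥ 4 and m ≥ n−1 real parameters. Then V attains its maximum over [1,m]^n at the point (m,1,...,1) (and its coordinate permutations). -/
set_option maxHeartbeats 1000000

/-- On the cube `[1,m]^n` with `n ≥ 4` and `m ≥ n - 1`, the function
`V(d) = ∑_j (d_j/∑_k d_k)²` attains its maximum at `(m,1,…,1)`. -/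
theorem naive_variance_max_at_corner (n : ℕ) (hn : 4 ≤ n) (m : ℝ) (hm : (n : ℝ) - 1 ≤ m)
    (d : Fin n → ℝ) (hd : ∀ j, d j ∈ Set.Icc (1 : ℝ) m) :
    (∑ j, (d j / ∑ k, d k) ^ 2) ≤
      ∑ j : Fin n, ((if (j : ℕ) = 0 then m else 1) / ∑ k : Fin n, (if (k : ℕ) = 0 then m else 1)) ^ 2 := by
  have hn0 : 0 < n := by omega
  have hne : Nonempty (Fin n) := ⟨⟨0, hn0⟩⟩
  have hN : (4:ℝ) ≤ (n:ℝ) := by exact_mod_cast hn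
  have hd1 : ∀ j, 1 ≤ d j := fun j => (hd j).1
  have hdm : ∀ j, d j ≤ m := fun j => (hd j).2
  -- generic sum of the indicator vector
  have hsum : ∀ x : ℝ, (∑ k : Fin n, (if (k:ℕ) = 0 then x else 1)) = x + ((n:ℝ) - 1) := by
    intro x
    have h0 : ∀ k : Fin n, (if (k:ℕ) = 0 then x else (1:ℝ))
        = (if k = (⟨0, hn0⟩ : Fin n) then x - 1 else 0) + 1 := by
      intro k
      by_cases h : (k:ℕ) = 0
      · have : k = (⟨0, hn0⟩ : Fin n) := by ext; simpa using h
        simp [h, this]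
      · have : k ≠ (⟨0, hn0⟩ : Fin n) := by
          intro hk; apply h; rw [hk]
        simp [h, this]
    rw [Finset.sum_congr rfl (fun k _ => h0 k), Finset.sum_add_distrib,
      Finset.sum_ite_eq']
    simp
    ring
  have hsq : ∀ k : Fin n, ((if (k:ℕ) = 0 then m else (1:ℝ)))^2
      = (if (k:ℕ) = 0 then m^2 else 1) := by
    intro k; by_cases h : (k:ℕ) = 0 <;> simp [h]
  set S : ℝ := ∑ k, d k with hS
  have hSn : (n:ℝ) ≤ S := by
    calc (n:ℝ) = ∑ _k : Fin n, (1:ℝ) := by simp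
    _ ≤ S := Finset.sum_le_sum (fun j _ => hd1 j)
  have hS0 : 0 < S := by linarith
  -- the max coordinate
  obtain ⟨j₀, -, hj₀⟩ := Finset.exists_max_image (Finset.univ : Finset (Fin n)) d
    Finset.univ_nonempty
  set M : ℝ := d j₀ with hM
  have hdM : ∀ j, d j ≤ M := fun j => hj₀ j (Finset.mem_univ j)
  have hM1 : 1 ≤ M := hd1 j₀
  have hMm : M ≤ m := hdm j₀
  have hSM : M + ((n:ℝ) - 1) ≤ S := by
    have herase : M + ∑ j ∈ Finset.univ.erase j₀, d j = S :=
      Finset.add_sum_erase _ d (Finset.mem_univ j₀)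
    have hcard : ((Finset.univ.erase j₀).card : ℝ) = (n:ℝ) - 1 := by
      rw [Finset.card_erase_of_mem (Finset.mem_univ j₀)]
      simp
      rw [Nat.cast_sub (by omega)]
      simp
    have : (n:ℝ) - 1 ≤ ∑ j ∈ Finset.univ.erase j₀, d j := by
      calc (n:ℝ) - 1 = ∑ _j ∈ Finset.univ.erase j₀, (1:ℝ) := by
            rw [Finset.sum_const, nsmul_eq_mul, mul_one, hcard]
      _ ≤ _ := Finset.sum_le_sum (fun j _ => hd1 j)
    linarith
  set Q : ℝ := ∑ j, (d j)^2 with hQdef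
  have hQ : Q ≤ (M+1)*S - (n:ℝ)*M := by
    have : Q ≤ ∑ j, ((M+1) * d j - M) :=
      Finset.sum_le_sum (fun j _ => by nlinarith [hd1 j, hdM j])
    calc Q ≤ ∑ j, ((M+1) * d j - M) := this
    _ = (M+1)*S - (n:ℝ)*M := by
        rw [Finset.sum_sub_distrib, ← Finset.mul_sum, Finset.sum_const, Finset.card_univ,
          Fintype.card_fin, nsmul_eq_mul]
  -- rewrite goal to cleared-denominator form
  have hW : (∑ k : Fin n, (if (k:ℕ) = 0 then m else (1:ℝ))) = m + ((n:ℝ)-1) := hsum m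
  have hW0 : 0 < m + ((n:ℝ)-1) := by linarith
  have hgoal : Q * (m + ((n:ℝ)-1))^2 ≤ (m^2 + ((n:ℝ)-1)) * S^2 := by
    rcases le_or_gt ((n:ℝ)-1) M with hcase | hcase
    · -- big max case
      have key2 : ((M+1)*S - (n:ℝ)*M) * (M+((n:ℝ)-1))^2 ≤ (M^2+((n:ℝ)-1)) * S^2 := by
        have h1 : 0 ≤ S - (M + ((n:ℝ)-1)) := by linarith
        have h2 : 0 ≤ (M^2+((n:ℝ)-1))*S - (n:ℝ)*M*(M+((n:ℝ)-1)) := by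
          nlinarith [mul_nonneg (sub_nonneg.2 hM1) (sub_nonneg.2 hcase)]
        nlinarith [mul_nonneg h1 h2]
      have key3 : (M^2+((n:ℝ)-1)) * (m+((n:ℝ)-1))^2 ≤ (m^2+((n:ℝ)-1)) * (M+((n:ℝ)-1))^2 := by
        have t1 : 0 ≤ (m - M) * (m*M - 1) := by
          apply mul_nonneg (by linarith)
          nlinarith [mul_nonneg (by linarith : (0:ℝ) ≤ m - 1) (by linarith : (0:ℝ) ≤ M - 1)]
        have t2 : 0 ≤ (m - M) * (m + M - 2) := by nlinarith
        nlinarith [mul_nonneg (by linarith : (0:ℝ) ≤ (n:ℝ)-1) t1,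
          mul_nonneg (mul_nonneg (by linarith : (0:ℝ) ≤ (n:ℝ)-1) (by linarith : (0:ℝ) ≤ (n:ℝ)-2)) t2]
      have hB2 : (0:ℝ) < (M+((n:ℝ)-1))^2 := by nlinarith
      have c3 : Q * (M+((n:ℝ)-1))^2 * (m+((n:ℝ)-1))^2
          ≤ (M^2+((n:ℝ)-1)) * S^2 * (m+((n:ℝ)-1))^2 := by
        have := le_trans (mul_le_mul_of_nonneg_right hQ (le_of_lt hB2)) key2
        exact mul_le_mul_of_nonneg_right this (by positivity)
      have c4 : (M^2+((n:ℝ)-1)) * (m+((n:ℝ)-1))^2 * S^2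
          ≤ (m^2+((n:ℝ)-1)) * (M+((n:ℝ)-1))^2 * S^2 :=
        mul_le_mul_of_nonneg_right key3 (sq_nonneg S)
      have final : (M+((n:ℝ)-1))^2 * (Q * (m+((n:ℝ)-1))^2)
          ≤ (M+((n:ℝ)-1))^2 * ((m^2+((n:ℝ)-1)) * S^2) := by nlinarith [c3, c4]
      exact le_of_mul_le_mul_left final hB2
    · -- small max case
      have hnM : (0:ℝ) < 4*((n:ℝ)*M) := by nlinarith
      have key2' : 4*((n:ℝ)*M)*((M+1)*S - (n:ℝ)*M) ≤ (M+1)^2*S^2 := by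
        nlinarith [sq_nonneg ((M+1)*S - 2*(n:ℝ)*M)]
      have key3' : (M+1)^2*(m+((n:ℝ)-1))^2 ≤ 4*((n:ℝ)*M)*(m^2+((n:ℝ)-1)) := by
        have p1 : ((n:ℝ)-1)*(M+1)^2 ≤ (n:ℝ)^2*M := by
          nlinarith [mul_nonneg (by linarith : (0:ℝ) ≤ ((n:ℝ)-1) - M)
            (by nlinarith : (0:ℝ) ≤ ((n:ℝ)-1)*M - 1)]
        have p2 : (n:ℝ)*(m+((n:ℝ)-1))^2 ≤ 4*((n:ℝ)-1)*(m^2+((n:ℝ)-1)) := by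
          nlinarith [sq_nonneg (m - ((n:ℝ)-1)),
            mul_nonneg (by linarith : (0:ℝ) ≤ m - ((n:ℝ)-1))
              (by nlinarith : (0:ℝ) ≤ ((n:ℝ)-1)*(((n:ℝ)-1)-1))]
        have hmul := mul_le_mul p1 p2 (by positivity) (by positivity)
        have hAn : (0:ℝ) < ((n:ℝ)-1)*(n:ℝ) := by nlinarith
        have final2 : (((n:ℝ)-1)*(n:ℝ)) * ((M+1)^2*(m+((n:ℝ)-1))^2)
            ≤ (((n:ℝ)-1)*(n:ℝ)) * (4*((n:ℝ)*M)*(m^2+((n:ℝ)-1))) := by nlinarith [hmul]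
        exact le_of_mul_le_mul_left final2 hAn
      have c3' : 4*((n:ℝ)*M) * Q * (m+((n:ℝ)-1))^2 ≤ (M+1)^2*S^2*(m+((n:ℝ)-1))^2 := by
        have := le_trans (mul_le_mul_of_nonneg_left hQ (le_of_lt hnM)) key2'
        exact mul_le_mul_of_nonneg_right this (by positivity)
      have c4' : (M+1)^2*(m+((n:ℝ)-1))^2*S^2 ≤ 4*((n:ℝ)*M)*(m^2+((n:ℝ)-1))*S^2 :=
        mul_le_mul_of_nonneg_right key3' (sq_nonneg S)
      have final : (4*((n:ℝ)*M)) * (Q * (m+((n:ℝ)-1))^2)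
          ≤ (4*((n:ℝ)*M)) * ((m^2+((n:ℝ)-1)) * S^2) := by nlinarith [c3', c4']
      exact le_of_mul_le_mul_left final hnM
  -- now convert goal
  calc (∑ j, (d j / S) ^ 2) = Q / S^2 := by
        simp only [div_pow, hQdef]
        rw [← Finset.sum_div]
  _ ≤ (m^2 + ((n:ℝ)-1)) / (m + ((n:ℝ)-1))^2 := by
      rw [div_le_div_iff₀ (by positivity) (by positivity)]
      exact hgoal
  _ = ∑ j : Fin n, ((if (j:ℕ) = 0 then m else 1) / ∑ k : Fin n, (if (k:ℕ) = 0 then m else 1)) ^ 2 := by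
      simp only [div_pow, hW]
      rw [← Finset.sum_div, Finset.sum_congr rfl (fun k _ => hsq k), hsum (m^2)]
end
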